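/- For all ξ ≥ 2, ∑_{ℓ ≤ ξ} μ(ℓ)² log(ξ/ℓ)/ℓ = (3/π²)(log ξ)² + O(log ξ), with an absolute implied constant. -/

import Mathlib

/-!
Since `μ(l)² = ∑_{d² ∣ l} μ(d)`, the sum equals `∑_{d ≤ √ξ} μ(d) d⁻² T(ξ / d²)`, where
`T(y) = ∑_{m ≤ y} log (y / m) / m` is `logHarmonicSum`. The integrand of
`∫₁^y log (y / t) / t dt = (log y)² / 2` is antitone, so `T(y) = (log y)² / 2 + O(log y)`.
Replacing `(log (ξ / d²))²` by `(log ξ)²` costs `O(log ξ · log d)`, which is summable against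
`d⁻²`. Finally `∑_{d ≤ √ξ} μ(d) / d² = 1 / ζ(2) + O(ξ^{-1/2}) = 6 / π² + O(ξ^{-1/2})`, an error
that `(log ξ)²` turns into `O(log ξ)`.
-/

open Finset Real Filter Topology
open scoped ArithmeticFunction.Moebius

lemma Nat.dvd_of_sq_dvd_sq_mul {a b d : ℕ} (ha : Squarefree a) (h : d ^ 2 ∣ b ^ 2 * a) :
    d ∣ b := by
  rcases eq_or_ne b 0 with rfl | hb
  · exact dvd_zero d
  have hba : b ^ 2 * a ≠ 0 := mul_ne_zero (pow_ne_zero 2 hb) ha.ne_zero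
  have hd : d ≠ 0 := by rintro rfl; simp_all
  rw [← Nat.factorization_le_iff_dvd hd hb]
  intro p
  have hp := (Nat.factorization_le_iff_dvd (pow_ne_zero 2 hd) hba).2 h p
  have ha1 := ha.natFactorization_le_one p
  simp only [Nat.factorization_mul (pow_ne_zero 2 hb) ha.ne_zero, Nat.factorization_pow,
    Finsupp.add_apply, Finsupp.smul_apply, smul_eq_mul] at hp
  omega

lemma moebius_sq_eq_sum_divisors_sq_dvd {l : ℕ} (hl : l ≠ 0) :
    μ l ^ 2 = ∑ d ∈ l.divisors with d ^ 2 ∣ l, μ d := by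
  obtain ⟨a, b, rfl, ha⟩ := Nat.sq_mul_squarefree l
  have hb : b ≠ 0 := by rintro rfl; simp at hl
  have hdiv : {d ∈ (b ^ 2 * a).divisors | d ^ 2 ∣ b ^ 2 * a} = b.divisors := by
    ext d
    simp only [mem_filter, Nat.mem_divisors, hb, hl, ne_eq, not_false_eq_true, and_true]
    exact ⟨fun h => Nat.dvd_of_sq_dvd_sq_mul ha h.2, fun h => ⟨(dvd_pow_self d two_ne_zero).trans
      ((pow_dvd_pow_of_dvd h 2).mul_right a), (pow_dvd_pow_of_dvd h 2).mul_right a⟩⟩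
  have hsq : Squarefree (b ^ 2 * a) ↔ b = 1 := by
    refine ⟨fun h => Nat.isUnit_iff.1 (h b ?_), by rintro rfl; simpa using ha⟩
    exact ⟨a, by ring⟩
  rw [hdiv, ← ArithmeticFunction.coe_mul_zeta_apply, ArithmeticFunction.moebius_mul_coe_zeta,
    ArithmeticFunction.one_apply, ArithmeticFunction.moebius_sq]
  simp only [hsq]

lemma sum_Icc_filter_dvd {M : Type*} [AddCommMonoid M] (f : ℕ → M) (N : ℕ) {k : ℕ}
    (hk : k ≠ 0) : ∑ l ∈ Icc 1 N with k ∣ l, f l = ∑ m ∈ Icc 1 (N / k), f (k * m) := by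
  symm
  refine sum_nbij' (k * ·) (· / k) ?_ ?_ ?_ ?_ (fun _ _ => rfl)
  · intro m hm
    simp only [mem_filter, mem_Icc] at hm ⊢
    refine ⟨⟨?_, ?_⟩, dvd_mul_right k m⟩
    · exact Nat.one_le_iff_ne_zero.2 (mul_ne_zero hk (by omega))
    · rw [mul_comm]; exact (Nat.le_div_iff_mul_le (by omega)).1 hm.2
  · intro l hl
    simp only [mem_filter, mem_Icc] at hl ⊢
    obtain ⟨⟨h1, hN⟩, m, rfl⟩ := hl
    rw [Nat.mul_div_cancel_left m (by omega)]
    refine ⟨Nat.one_le_iff_ne_zero.2 (right_ne_zero_of_mul (by omega : k * m ≠ 0)), ?_⟩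
    exact (Nat.le_div_iff_mul_le (by omega)).2 (by rwa [mul_comm])
  · intro m _
    exact Nat.mul_div_cancel_left m (by omega)
  · intro l hl
    exact Nat.mul_div_cancel' (mem_filter.1 hl).2

lemma sum_Icc_sum_sq_dvd {M : Type*} [AddCommMonoid M] (F : ℕ → ℕ → M) (N : ℕ) :
    ∑ l ∈ Icc 1 N, ∑ d ∈ l.divisors with d ^ 2 ∣ l, F d l =
      ∑ d ∈ Icc 1 N.sqrt, ∑ m ∈ Icc 1 (N / d ^ 2), F d (d ^ 2 * m) := by
  rw [sum_comm' (t' := Icc 1 N.sqrt) (s' := fun d => {l ∈ Icc 1 N | d ^ 2 ∣ l})]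
  · refine sum_congr rfl fun d hd => sum_Icc_filter_dvd _ N (pow_ne_zero 2 ?_)
    exact (Nat.one_le_iff_ne_zero.1 (mem_Icc.1 hd).1)
  · intro l d
    simp only [mem_Icc, mem_filter, Nat.mem_divisors, Nat.le_sqrt']
    constructor
    · rintro ⟨⟨hl, hlN⟩, ⟨hdl', -⟩, hdl⟩
      have := Nat.le_of_dvd (by omega) hdl
      exact ⟨⟨⟨hl, hlN⟩, hdl⟩, Nat.pos_of_dvd_of_pos hdl' hl, by omega⟩
    · rintro ⟨⟨⟨hl, hlN⟩, hdl⟩, -, -⟩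
      exact ⟨⟨hl, hlN⟩, ⟨(dvd_pow_self d two_ne_zero).trans hdl, by omega⟩, hdl⟩

lemma sum_Icc_sq_moebius_mul {R : Type*} [CommRing R] (g : ℕ → R) (N : ℕ) :
    ∑ l ∈ Icc 1 N, (μ l : R) ^ 2 * g l =
      ∑ d ∈ Icc 1 N.sqrt, (μ d : R) * ∑ m ∈ Icc 1 (N / d ^ 2), g (d ^ 2 * m) := by
  calc ∑ l ∈ Icc 1 N, (μ l : R) ^ 2 * g l
      = ∑ l ∈ Icc 1 N, ∑ d ∈ l.divisors with d ^ 2 ∣ l, (μ d : R) * g l := by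
        refine sum_congr rfl fun l hl => ?_
        rw [← Int.cast_pow, moebius_sq_eq_sum_divisors_sq_dvd
          (by simp only [mem_Icc] at hl; omega), Int.cast_sum,
          sum_mul]
    _ = _ := by simp_rw [sum_Icc_sum_sq_dvd, mul_sum]

noncomputable def logHarmonicSum (y : ℝ) : ℝ := ∑ m ∈ Icc 1 ⌊y⌋₊, log (y / m) / m

lemma antitoneOn_log_div_div (y : ℝ) :
    AntitoneOn (fun t => log (y / t) / t) (Set.Icc 1 y) := by
  rintro s ⟨hs1, hsy⟩ t ⟨ht1, hty⟩ hst
  have hs0 : 0 < s := by linarith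
  exact div_le_div₀ (log_nonneg ((one_le_div hs0).2 hsy))
    (log_le_log (div_pos (by linarith) (by linarith))
      (div_le_div_of_nonneg_left (by linarith) hs0 hst)) hs0 hst

lemma integral_log_div_div {y b : ℝ} (hy : y ≠ 0) (hb : 0 < b) :
    ∫ t in (1 : ℝ)..b, log (y / t) / t = (log y ^ 2 - log (y / b) ^ 2) / 2 := by
  have hpos : ∀ t ∈ Set.uIcc 1 b, 0 < t := fun t ht => by
    rcases Set.mem_uIcc.1 ht with h | h <;> linarith [h.1]
  have hderiv : ∀ t ∈ Set.uIcc 1 b,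
      HasDerivAt (fun t => -log (y / t) ^ 2 / 2) (log (y / t) / t) t := by
    intro t ht
    have ht0 := (hpos t ht).ne'
    have hlog : HasDerivAt (fun t => log (y / t)) (-t⁻¹) t := by
      convert ((hasDerivAt_const t y).fun_div (hasDerivAt_id' t) ht0).log
        (div_ne_zero hy ht0) using 1
      field_simp
      ring
    refine ((hlog.fun_pow 2).fun_neg.div_const 2).congr_deriv ?_
    field_simp
    ring
  rw [intervalIntegral.integral_eq_sub_of_hasDerivAt hderiv]
  · simp only [div_one]
    ring
  · refine ContinuousOn.intervalIntegrable fun t ht => ?_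
    have ht0 := (hpos t ht).ne'
    exact (((continuousAt_const.div continuousAt_id ht0).log (div_ne_zero hy ht0)).div
      continuousAt_id ht0).continuousWithinAt

lemma abs_logHarmonicSum_sub_le {y : ℝ} (hy : 1 ≤ y) :
    |logHarmonicSum y - log y ^ 2 / 2| ≤ log y + 1 := by
  set f : ℝ → ℝ := fun t => log (y / t) / t
  set n := ⌊y⌋₊
  have hn : 1 ≤ n := Nat.one_le_floor_iff y |>.2 hy
  have hny : (n : ℝ) ≤ y := Nat.floor_le (by linarith)
  have hyn : y < n + 1 := Nat.lt_floor_add_one y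
  have hn0 : (0 : ℝ) < n := by exact_mod_cast hn
  have hanti : AntitoneOn f (Set.Icc ((1 : ℕ) : ℝ) n) := by
    rw [Nat.cast_one]
    exact (antitoneOn_log_div_div y).mono (Set.Icc_subset_Icc_right hny)
  have hlower := hanti.integral_le_sum_Ico hn
  have hupper := hanti.sum_le_integral_Ico hn
  rw [Nat.cast_one, integral_log_div_div (by linarith) hn0] at hlower hupper
  have hT : logHarmonicSum y = f 1 + ∑ i ∈ Ico 1 n, f ↑(i + 1) := by
    rw [logHarmonicSum, ← Ico_add_one_right_eq_Icc, ← zero_add 1, ← sum_Ico_add',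
      sum_eq_sum_Ico_succ_bot (by omega)]
    simp [f, n]
  have hsum_le : ∑ i ∈ Ico 1 n, f i ≤ logHarmonicSum y := by
    have hfn : 0 ≤ f n := div_nonneg (log_nonneg ((one_le_div hn0).2 hny)) hn0.le
    rw [logHarmonicSum, ← Ico_add_one_right_eq_Icc, sum_Ico_succ_top hn]
    linarith
  have hlog_small : log (y / n) ^ 2 ≤ 1 := by
    have h0 : 0 ≤ log (y / n) := log_nonneg ((one_le_div hn0).2 hny)
    have h1 : y / n - 1 ≤ 1 := by
      rw [div_sub_one hn0.ne', div_le_one hn0]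
      linarith [show (1 : ℝ) ≤ n by exact_mod_cast hn]
    nlinarith [log_le_sub_one_of_pos (div_pos (by linarith : 0 < y) hn0)]
  have hf1 : f 1 = log y := by simp [f]
  rw [abs_le]
  constructor <;> linarith [log_nonneg hy, sq_nonneg (log (y / n))]

lemma sum_sq_moebius_mul_log_div_eq (ξ : ℝ) :
    ∑ l ∈ Icc 1 ⌊ξ⌋₊, (μ l : ℝ) ^ 2 * log (ξ / l) / l =
      ∑ d ∈ Icc 1 (Nat.sqrt ⌊ξ⌋₊), (μ d : ℝ) / d ^ 2 * logHarmonicSum (ξ / d ^ 2) := by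
  simp_rw [mul_div_assoc]
  rw [sum_Icc_sq_moebius_mul]
  refine sum_congr rfl fun d _ => ?_
  rw [logHarmonicSum, ← Nat.cast_pow, Nat.floor_div_natCast, div_mul_eq_mul_div, mul_sum,
    mul_sum, sum_div]
  refine sum_congr rfl fun m _ => ?_
  push_cast
  rw [div_div, mul_div_assoc, div_div, mul_comm (m : ℝ)]

lemma abs_sum_moebius_mul_le (s : Finset ℕ) (a : ℕ → ℝ) :
    |∑ d ∈ s, (μ d : ℝ) * a d| ≤ ∑ d ∈ s, |a d| := by
  refine (abs_sum_le_sum_abs _ _).trans (sum_le_sum fun d _ => ?_)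
  rw [abs_mul]
  exact mul_le_of_le_one_left (abs_nonneg _)
    (by exact_mod_cast ArithmeticFunction.abs_moebius_le_one)

lemma sum_Ioc_inv_sq_le (D E : ℕ) : ∑ d ∈ Ioc D E, ((d : ℝ) ^ 2)⁻¹ ≤ 2 / ((D : ℝ) + 1) := by
  rw [← Ioo_add_one_right_eq_Ioc]
  exact sum_Ioo_inv_sq_le D (E + 1)

lemma hasSum_moebius_div_sq : HasSum (fun n : ℕ => (μ n : ℝ) / n ^ 2) (6 / π ^ 2) := by
  have h2 : 1 < (2 : ℂ).re := by norm_num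
  have hL : LSeries (fun n => (μ n : ℂ)) 2 = 6 / π ^ 2 := by
    have := ArithmeticFunction.LSeries_zeta_mul_Lseries_moebius h2
    rw [ArithmeticFunction.LSeries_zeta_eq_riemannZeta h2, riemannZeta_two] at this
    have hπ : (π : ℂ) ≠ 0 := Complex.ofReal_ne_zero.2 pi_ne_zero
    field_simp at this ⊢
    linear_combination this
  have := (ArithmeticFunction.LSeriesSummable_moebius_iff.2 h2).LSeriesHasSum
  rw [LSeriesHasSum, hL] at this
  rw [← Complex.hasSum_ofReal]
  convert this using 1
  · ext n
    rcases eq_or_ne n 0 with rfl | hn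
    · simp
    · rw [LSeries.term_of_ne_zero hn]
      push_cast
      norm_cast
  · push_cast; rfl

lemma abs_sum_Icc_moebius_div_sq_sub_le (D : ℕ) :
    |∑ d ∈ Icc 1 D, (μ d : ℝ) / d ^ 2 - 6 / π ^ 2| ≤ 2 / ((D : ℝ) + 1) := by
  set A : ℕ → ℝ := fun E => ∑ d ∈ Icc 1 E, (μ d : ℝ) / d ^ 2
  have hA : Tendsto A atTop (𝓝 (6 / π ^ 2)) := by
    have := hasSum_moebius_div_sq.tendsto_sum_nat.comp (tendsto_add_atTop_nat 1)
    refine this.congr fun E => ?_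
    rw [Function.comp_apply, range_eq_Ico, sum_eq_sum_Ico_succ_bot (Nat.zero_lt_succ E)]
    simp [A, Ico_add_one_right_eq_Icc]
  have htail : ∀ E ≥ D, |A D - A E| ≤ 2 / ((D : ℝ) + 1) := by
    intro E hE
    have : A E = A D + ∑ d ∈ Ioc D E, (μ d : ℝ) * ((d : ℝ) ^ 2)⁻¹ := by
      simp only [A, div_eq_mul_inv]
      rw [← sum_union]
      · congr 1; ext d; simp only [mem_union, mem_Icc, mem_Ioc]; omega
      · exact disjoint_left.2 fun d h1 h2 => by simp only [mem_Icc, mem_Ioc] at h1 h2; omega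
    rw [this, sub_add_cancel_left, abs_neg]
    refine (abs_sum_moebius_mul_le _ _).trans ?_
    simpa using sum_Ioc_inv_sq_le D E
  exact le_of_tendsto ((tendsto_const_nhds.sub hA).abs) (eventually_atTop.2 ⟨D, htail⟩)

lemma abs_logHarmonicSum_div_sq_sub_le {ξ : ℝ} {d : ℕ} (hd : 1 ≤ d) (hdξ : (d : ℝ) ^ 2 ≤ ξ) :
    |logHarmonicSum (ξ / d ^ 2) - log ξ ^ 2 / 2| ≤ log ξ + 1 + 2 * log ξ * log d := by
  have hd0 : (0 : ℝ) < d ^ 2 := by positivity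
  have hy : 1 ≤ ξ / d ^ 2 := (one_le_div hd0).2 hdξ
  have hlog : log (ξ / d ^ 2) = log ξ - 2 * log d := by
    rw [log_div (by linarith) hd0.ne', log_pow]
    push_cast
    ring
  have hT := abs_logHarmonicSum_sub_le hy
  have hy0 := log_nonneg hy
  rw [hlog] at hT hy0
  have hlogd := log_natCast_nonneg d
  rw [abs_le] at hT ⊢
  constructor <;> nlinarith

lemma summable_log_div_sq : Summable (fun n : ℕ => log n / n ^ 2) := by
  refine Summable.of_nonneg_of_le (fun n => div_nonneg (log_natCast_nonneg n) (by positivity))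
    (fun n => ?_) ((summable_nat_rpow.2 (by norm_num : (-3 / 2 : ℝ) < -1)).mul_left 2)
  rcases eq_or_ne n 0 with rfl | hn
  · simp
  have hn0 : (0 : ℝ) < n := by positivity
  have hsqrt : (n : ℝ) ^ (1 / 2 : ℝ) = (n : ℝ) ^ (-3 / 2 : ℝ) * n ^ 2 := by
    rw [← rpow_natCast, ← rpow_add hn0]
    norm_num
  have := log_le_rpow_div hn0.le (by norm_num : (0 : ℝ) < 1 / 2)
  rw [hsqrt] at this
  rw [div_le_iff₀ (by positivity)]
  linarith

lemma sq_le_of_le_sqrt_floor {ξ : ℝ} (hξ : 0 ≤ ξ) {d : ℕ} (hd : d ≤ Nat.sqrt ⌊ξ⌋₊) :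
    (d : ℝ) ^ 2 ≤ ξ :=
  le_trans (by exact_mod_cast Nat.le_sqrt'.1 hd) (Nat.floor_le hξ)

lemma log_le_two_mul_sqrt_floor {ξ : ℝ} (hξ : 0 < ξ) : log ξ ≤ 2 * Nat.sqrt ⌊ξ⌋₊ := by
  set D := Nat.sqrt ⌊ξ⌋₊
  have hξD : ξ < ((D : ℝ) + 1) ^ 2 := by
    have h : ((⌊ξ⌋₊ + 1 : ℕ) : ℝ) ≤ ((D + 1) ^ 2 : ℕ) := Nat.cast_le.2 (Nat.lt_succ_sqrt' ⌊ξ⌋₊)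
    push_cast at h
    linarith [Nat.lt_floor_add_one ξ]
  calc log ξ ≤ log (((D : ℝ) + 1) ^ 2) := log_le_log hξ hξD.le
    _ = 2 * log ((D : ℝ) + 1) := by rw [log_pow]; norm_num
    _ ≤ 2 * D := by linarith [log_le_sub_one_of_pos (by positivity : (0 : ℝ) < D + 1)]

lemma abs_sum_moebius_mul_logHarmonicSum_sub_le {ξ : ℝ} (hξ : 1 ≤ ξ) :
    |∑ d ∈ Icc 1 (Nat.sqrt ⌊ξ⌋₊),
        (μ d : ℝ) * ((logHarmonicSum (ξ / d ^ 2) - log ξ ^ 2 / 2) / d ^ 2)|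
      ≤ 2 * (log ξ + 1) + 2 * log ξ * ∑' n : ℕ, log n / n ^ 2 := by
  set L := log ξ
  set D := Nat.sqrt ⌊ξ⌋₊
  have hL := log_nonneg hξ
  have hinv : ∑ d ∈ Icc 1 D, ((d : ℝ) ^ 2)⁻¹ ≤ 2 := by
    have := sum_Ioc_inv_sq_le 0 D
    rwa [← Icc_add_one_left_eq_Ioc, zero_add, Nat.cast_zero, zero_add, div_one] at this
  have hlog : ∑ d ∈ Icc 1 D, log d / (d : ℝ) ^ 2 ≤ ∑' n : ℕ, log n / n ^ 2 :=
    summable_log_div_sq.sum_le_tsum _ fun n _ => div_nonneg (log_natCast_nonneg n) (by positivity)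
  calc _ ≤ ∑ d ∈ Icc 1 D, |(logHarmonicSum (ξ / d ^ 2) - L ^ 2 / 2) / d ^ 2| :=
        abs_sum_moebius_mul_le _ _
    _ ≤ ∑ d ∈ Icc 1 D, ((L + 1) * ((d : ℝ) ^ 2)⁻¹ + 2 * L * (log d / d ^ 2)) := by
        refine sum_le_sum fun d hd => ?_
        obtain ⟨hd1, hdD⟩ := mem_Icc.1 hd
        have hd0 : (0 : ℝ) < d ^ 2 := by positivity
        rw [abs_div, abs_of_pos hd0]
        calc _ ≤ (L + 1 + 2 * L * log d) / d ^ 2 := div_le_div_of_nonneg_right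
              (abs_logHarmonicSum_div_sq_sub_le hd1 (sq_le_of_le_sqrt_floor (by linarith) hdD))
              hd0.le
          _ = _ := by ring
    _ = (L + 1) * ∑ d ∈ Icc 1 D, ((d : ℝ) ^ 2)⁻¹ + 2 * L * ∑ d ∈ Icc 1 D, log d / d ^ 2 := by
        rw [sum_add_distrib, mul_sum, mul_sum]
    _ ≤ (L + 1) * 2 + 2 * L * ∑' n : ℕ, log n / n ^ 2 := by gcongr
    _ = _ := by ring

lemma abs_sq_log_mul_sum_moebius_div_sq_sub_le {ξ : ℝ} (hξ : 1 ≤ ξ) :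
    |log ξ ^ 2 / 2 * (∑ d ∈ Icc 1 (Nat.sqrt ⌊ξ⌋₊), (μ d : ℝ) / d ^ 2 - 6 / π ^ 2)|
      ≤ 2 * log ξ := by
  set L := log ξ
  set D := Nat.sqrt ⌊ξ⌋₊
  have hL := log_nonneg hξ
  have hLD : L / (D + 1) ≤ 2 :=
    (div_le_iff₀ (by positivity)).2 (by linarith [log_le_two_mul_sqrt_floor (by linarith : 0 < ξ)])
  rw [abs_mul, abs_of_nonneg (by positivity)]
  calc _ ≤ L ^ 2 / 2 * (2 / (D + 1)) := by gcongr; exact abs_sum_Icc_moebius_div_sq_sub_le D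
    _ = L * (L / (D + 1)) := by ring
    _ ≤ L * 2 := by gcongr
    _ = 2 * L := by ring

open ArithmeticFunction in
/-- For all `ξ ≥ 2`,
`∑_{ℓ ≤ ξ} μ(ℓ)² log(ξ/ℓ)/ℓ = (3/π²)(log ξ)² + O(log ξ)`, with an absolute
implied constant. -/
theorem squarefree_log_weighted_sum :
    ∃ C : ℝ, 0 < C ∧ ∀ ξ : ℝ, 2 ≤ ξ →
      |(∑ l ∈ Finset.Icc 1 ⌊ξ⌋₊,
            (moebius l : ℝ) ^ 2 * Real.log (ξ / l) / l)
          - 3 / Real.pi ^ 2 * Real.log ξ ^ 2| ≤ C * Real.log ξ := by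
  set K := ∑' n : ℕ, Real.log n / n ^ 2
  have hK : 0 ≤ K := tsum_nonneg fun n => div_nonneg (log_natCast_nonneg n) (by positivity)
  refine ⟨8 + 2 * K, by positivity, fun ξ hξ => ?_⟩
  set L := Real.log ξ
  set D := Nat.sqrt ⌊ξ⌋₊
  have hL : 1 / 2 ≤ L := by linarith [log_le_log (by norm_num) hξ, log_two_gt_d9]
  have hsplit : ∑ d ∈ Icc 1 D, (μ d : ℝ) / d ^ 2 * logHarmonicSum (ξ / d ^ 2) - 3 / π ^ 2 * L ^ 2
      = ∑ d ∈ Icc 1 D, (μ d : ℝ) * ((logHarmonicSum (ξ / d ^ 2) - L ^ 2 / 2) / d ^ 2)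
        + L ^ 2 / 2 * (∑ d ∈ Icc 1 D, (μ d : ℝ) / d ^ 2 - 6 / π ^ 2) := by
    rw [mul_sub, mul_sum, ← add_sub_assoc, ← sum_add_distrib]
    congr 1
    · exact sum_congr rfl fun d _ => by ring
    · ring
  rw [sum_sq_moebius_mul_log_div_eq, hsplit]
  calc _ ≤ _ := abs_add_le _ _
    _ ≤ 2 * (L + 1) + 2 * L * K + 2 * L :=
        add_le_add (abs_sum_moebius_mul_logHarmonicSum_sub_le (by linarith))
          (abs_sq_log_mul_sum_moebius_div_sq_sub_le (by linarith))
    _ ≤ (8 + 2 * K) * L := by nlinarith
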